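/- arXiv:2301.10032 — 2 statements merged into one kernel-verified Lean document; each statement's English description precedes it below -/
import Mathlib

section
/- For every SafeLTL_B formula φ, every infinite word τ ∈ (2^AP)^ω and every t ∈ ℕ: τ ⊭_t φ if and only if there exists k ∈ ℕ with expand^k(φ, τ[t]) = ⊥. In particular (the case t = 0): τ ∉ L(φ) if and only if there exists k with expand^k(φ, τ) = ⊥. -/
/-- `SafeLTL_B` formulas over atomic propositions `AP`
(together with the constants `⊤` and `⊥`). -/
inductive SLTL (AP : Type) : Type
  | tt : SLTL AP
  | ff : SLTL AP
  | atom : AP → SLTL AP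
  | natom : AP → SLTL AP
  | conj : SLTL AP → SLTL AP → SLTL AP
  | disj : SLTL AP → SLTL AP → SLTL AP
  | next : ℕ → SLTL AP → SLTL AP          -- X^n φ
  | fleq : ℕ → SLTL AP → SLTL AP          -- F≤n φ
  | wleq : ℕ → SLTL AP → SLTL AP → SLTL AP -- φ W≤n ψ
  | wuntil : SLTL AP → SLTL AP → SLTL AP   -- φ W ψ

namespace SLTL

/-- Satisfaction `w ⊨ₖ φ` of a formula by an infinite word at position `k`. -/
def Sat {AP : Type} (w : ℕ → Set AP) : SLTL AP → ℕ → Prop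
  | .tt, _ => True
  | .ff, _ => False
  | .atom a, k => a ∈ w k
  | .natom a, k => a ∉ w k
  | .conj φ ψ, k => Sat w φ k ∧ Sat w ψ k
  | .disj φ ψ, k => Sat w φ k ∨ Sat w ψ k
  | .next n φ, k => Sat w φ (k + n)
  | .fleq n φ, k => ∃ i ≤ n, Sat w φ (k + i)
  | .wleq n φ ψ, k =>
      (∀ i ≤ n, Sat w φ (k + i)) ∨ (∃ j ≤ n, Sat w ψ (k + j) ∧ ∀ i < j, Sat w φ (k + i))
  | .wuntil φ ψ, k =>
      (∀ i, Sat w φ (k + i)) ∨ (∃ j, Sat w ψ (k + j) ∧ ∀ i < j, Sat w φ (k + i))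

/-- The language of a formula. -/
def lang {AP : Type} (φ : SLTL AP) : Set (ℕ → Set AP) := { w | Sat w φ 0 }

/-- Constant folding: `⊤∧ψ = ψ∧⊤ = ψ`, `⊥∧ψ = ψ∧⊥ = ⊥`, `⊥∨ψ = ψ∨⊥ = ψ`, `⊤∨ψ = ψ∨⊤ = ⊤`. -/
def cfold {AP : Type} : SLTL AP → SLTL AP
  | .conj .tt ψ => ψ
  | .conj φ .tt => φ
  | .conj .ff _ => .ff
  | .conj _ .ff => .ff
  | .disj .ff ψ => ψ
  | .disj φ .ff => φ
  | .disj .tt _ => .tt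
  | .disj _ .tt => .tt
  | φ => φ

open Classical in
/-- One-step expansion `expand(φ, m)` of a formula under the letter `m ⊆ AP`. -/
noncomputable def expand {AP : Type} : SLTL AP → Set AP → SLTL AP
  | .tt, _ => .tt
  | .ff, _ => .ff
  | .atom a, m => if a ∈ m then .tt else .ff
  | .natom a, m => if a ∈ m then .ff else .tt
  | .conj φ ψ, m => cfold (.conj (expand φ m) (expand ψ m))
  | .disj φ ψ, m => cfold (.disj (expand φ m) (expand ψ m))
  | .next 0 φ, m => expand φ m
  | .next (n+1) φ, _ => .next n φ
  | .fleq 0 φ, m => expand φ m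
  | .fleq (n+1) φ, m => cfold (.disj (expand φ m) (.fleq n φ))
  | .wleq 0 φ ψ, m => cfold (.disj (expand ψ m) (expand φ m))
  | .wleq (n+1) φ ψ, m => cfold (.disj (expand ψ m) (.conj (expand φ m) (.wleq n φ ψ)))
  | .wuntil φ ψ, m => cfold (.disj (expand ψ m) (.conj (expand φ m) (.wuntil φ ψ)))

/-- Iterated expansion `expand^k(φ, τ)` along the word `τ`. -/
noncomputable def expandIter {AP : Type} (φ : SLTL AP) (τ : ℕ → Set AP) : ℕ → SLTL AP
  | 0 => φ
  | k+1 => expand (expandIter φ τ k) (τ k)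

variable {AP : Type}

noncomputable def cconj (a b : SLTL AP) : SLTL AP := cfold (.conj a b)
noncomputable def cdisj (a b : SLTL AP) : SLTL AP := cfold (.disj a b)

lemma cconj_tt_left (x : SLTL AP) : cconj .tt x = x := by cases x <;> rfl
lemma cconj_tt_right (x : SLTL AP) : cconj x .tt = x := by cases x <;> rfl
lemma cconj_ff_left (x : SLTL AP) : cconj .ff x = .ff := by cases x <;> rfl
lemma cconj_ff_right (x : SLTL AP) : cconj x .ff = .ff := by cases x <;> rfl
lemma cdisj_ff_left (x : SLTL AP) : cdisj .ff x = x := by cases x <;> rfl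
lemma cdisj_ff_right (x : SLTL AP) : cdisj x .ff = x := by cases x <;> rfl
lemma cdisj_tt_left (x : SLTL AP) : cdisj .tt x = .tt := by cases x <;> rfl
lemma cdisj_tt_right (x : SLTL AP) : cdisj x .tt = .tt := by cases x <;> rfl

lemma expand_tt (m : Set AP) : expand (.tt : SLTL AP) m = .tt := rfl
lemma expand_ff (m : Set AP) : expand (.ff : SLTL AP) m = .ff := rfl

lemma expand_cconj (a b : SLTL AP) (m : Set AP) :
    expand (cconj a b) m = cconj (expand a m) (expand b m) := by
  cases a <;> cases b <;>
    (try simp only [cconj_tt_left, cconj_tt_right, cconj_ff_left, cconj_ff_right,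
      expand_tt, expand_ff]) <;> rfl

lemma expand_cdisj (a b : SLTL AP) (m : Set AP) :
    expand (cdisj a b) m = cdisj (expand a m) (expand b m) := by
  cases a <;> cases b <;>
    (try simp only [cdisj_tt_left, cdisj_tt_right, cdisj_ff_left, cdisj_ff_right,
      expand_tt, expand_ff]) <;> rfl

lemma sat_cconj (w : ℕ → Set AP) (a b : SLTL AP) (k : ℕ) :
    Sat w (cconj a b) k ↔ Sat w a k ∧ Sat w b k := by
  cases a <;> cases b <;> first
    | (simp [cconj, cfold, Sat])
    | (exact Iff.rfl)

lemma sat_cdisj (w : ℕ → Set AP) (a b : SLTL AP) (k : ℕ) :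
    Sat w (cdisj a b) k ↔ Sat w a k ∨ Sat w b k := by
  cases a <;> cases b <;> first
    | (simp [cdisj, cfold, Sat])
    | (exact Iff.rfl)

/-- shifting the word shifts positions -/
lemma sat_shift (w : ℕ → Set AP) (m : ℕ) :
    ∀ (φ : SLTL AP) (k : ℕ), Sat (fun i => w (i + m)) φ k ↔ Sat w φ (k + m) := by
  intro φ
  induction φ with
  | tt => intro k; exact Iff.rfl
  | ff => intro k; exact Iff.rfl
  | atom a => intro k; exact Iff.rfl
  | natom a => intro k; exact Iff.rfl
  | conj φ ψ ihφ ihψ => intro k; exact and_congr (ihφ k) (ihψ k)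
  | disj φ ψ ihφ ihψ => intro k; exact or_congr (ihφ k) (ihψ k)
  | next n φ ih =>
      intro k
      show Sat _ φ (k + n) ↔ Sat w φ (k + m + n)
      rw [ih, show k + n + m = k + m + n from by omega]
  | fleq n φ ih =>
      intro k
      show (∃ i ≤ n, Sat _ φ (k + i)) ↔ ∃ i ≤ n, Sat w φ (k + m + i)
      refine exists_congr fun i => and_congr_right fun _ => ?_
      rw [ih, show k + i + m = k + m + i from by omega]
  | wleq n φ ψ ihφ ihψ =>
      intro k
      show ((∀ i ≤ n, Sat _ φ (k + i)) ∨ ∃ j ≤ n, Sat _ ψ (k + j) ∧ ∀ i < j, Sat _ φ (k + i)) ↔ _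
      apply or_congr
      · refine forall_congr' fun i => forall_congr' fun _ => ?_
        rw [ihφ, show k + i + m = k + m + i from by omega]
      · refine exists_congr fun j => and_congr_right fun _ => and_congr ?_ ?_
        · rw [ihψ, show k + j + m = k + m + j from by omega]
        · refine forall_congr' fun i => forall_congr' fun _ => ?_
          rw [ihφ, show k + i + m = k + m + i from by omega]
  | wuntil φ ψ ihφ ihψ =>
      intro k
      show ((∀ i, Sat _ φ (k + i)) ∨ ∃ j, Sat _ ψ (k + j) ∧ ∀ i < j, Sat _ φ (k + i)) ↔ _
      apply or_congr
      · refine forall_congr' fun i => ?_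
        rw [ihφ, show k + i + m = k + m + i from by omega]
      · refine exists_congr fun j => and_congr ?_ ?_
        · rw [ihψ, show k + j + m = k + m + j from by omega]
        · refine forall_congr' fun i => forall_congr' fun _ => ?_
          rw [ihφ, show k + i + m = k + m + i from by omega]

/-- one-step expansion law -/
lemma sat_expand (w : ℕ → Set AP) :
    ∀ (φ : SLTL AP) (k : ℕ), Sat w φ k ↔ Sat w (expand φ (w k)) (k + 1) := by
  intro φ
  induction φ with
  | tt => intro k; exact Iff.rfl
  | ff => intro k; exact Iff.rfl
  | atom a => intro k; by_cases h : a ∈ w k <;> simp [expand, Sat, h]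
  | natom a => intro k; by_cases h : a ∈ w k <;> simp [expand, Sat, h]
  | conj φ ψ ihφ ihψ =>
      intro k
      show (Sat w φ k ∧ Sat w ψ k) ↔ Sat w (cconj (expand φ (w k)) (expand ψ (w k))) (k + 1)
      rw [sat_cconj, ← ihφ, ← ihψ]
  | disj φ ψ ihφ ihψ =>
      intro k
      show (Sat w φ k ∨ Sat w ψ k) ↔ Sat w (cdisj (expand φ (w k)) (expand ψ (w k))) (k + 1)
      rw [sat_cdisj, ← ihφ, ← ihψ]
  | next n φ ih =>
      intro k
      cases n with
      | zero => show Sat w φ (k + 0) ↔ Sat w (expand φ (w k)) (k + 1)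
                rw [Nat.add_zero, ih]
      | succ n => show Sat w φ (k + (n + 1)) ↔ Sat w φ (k + 1 + n)
                  rw [show k + (n + 1) = k + 1 + n from by omega]
  | fleq n φ ih =>
      intro k
      cases n with
      | zero =>
        show (∃ i ≤ 0, Sat w φ (k + i)) ↔ Sat w (expand φ (w k)) (k + 1)
        rw [← ih]
        constructor
        · rintro ⟨i, hi, hs⟩
          obtain rfl : i = 0 := Nat.le_zero.mp hi
          simpa using hs
        · intro hs; exact ⟨0, Nat.le_refl 0, by simpa using hs⟩
      | succ n =>
        show (∃ i ≤ n + 1, Sat w φ (k + i)) ↔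
          Sat w (cdisj (expand φ (w k)) (.fleq n φ)) (k + 1)
        rw [sat_cdisj, ← ih]
        show _ ↔ Sat w φ k ∨ ∃ i ≤ n, Sat w φ (k + 1 + i)
        constructor
        · rintro ⟨i, hi, hs⟩
          cases i with
          | zero => exact Or.inl (by simpa using hs)
          | succ i => exact Or.inr ⟨i, by omega,
              by rw [show k + 1 + i = k + (i + 1) from by omega]; exact hs⟩
        · rintro (hs | ⟨i, hi, hs⟩)
          · exact ⟨0, by omega, by simpa using hs⟩
          · exact ⟨i + 1, by omega,
              by rw [show k + (i + 1) = k + 1 + i from by omega]; exact hs⟩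
  | wleq n φ ψ ihφ ihψ =>
      intro k
      cases n with
      | zero =>
        show ((∀ i ≤ 0, Sat w φ (k + i)) ∨ ∃ j ≤ 0, Sat w ψ (k + j) ∧ ∀ i < j, Sat w φ (k + i))
          ↔ Sat w (cdisj (expand ψ (w k)) (expand φ (w k))) (k + 1)
        rw [sat_cdisj, ← ihφ, ← ihψ]
        constructor
        · rintro (hall | ⟨j, hj, hs, _⟩)
          · exact Or.inr (by simpa using hall 0 (Nat.le_refl 0))
          · obtain rfl : j = 0 := Nat.le_zero.mp hj
            exact Or.inl (by simpa using hs)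
        · rintro (hs | hs)
          · exact Or.inr ⟨0, Nat.le_refl 0, by simpa using hs, fun i hi => absurd hi (by omega)⟩
          · refine Or.inl fun i hi => ?_
            obtain rfl : i = 0 := Nat.le_zero.mp hi
            simpa using hs
      | succ n =>
        show ((∀ i ≤ n + 1, Sat w φ (k + i)) ∨
            ∃ j ≤ n + 1, Sat w ψ (k + j) ∧ ∀ i < j, Sat w φ (k + i))
          ↔ Sat w (cdisj (expand ψ (w k)) (.conj (expand φ (w k)) (.wleq n φ ψ))) (k + 1)
        rw [sat_cdisj]
        show _ ↔ Sat w (expand ψ (w k)) (k + 1) ∨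
          (Sat w (expand φ (w k)) (k + 1) ∧ Sat w (.wleq n φ ψ) (k + 1))
        rw [← ihφ, ← ihψ]
        show _ ↔ Sat w ψ k ∨ (Sat w φ k ∧
          ((∀ i ≤ n, Sat w φ (k + 1 + i)) ∨
            ∃ j ≤ n, Sat w ψ (k + 1 + j) ∧ ∀ i < j, Sat w φ (k + 1 + i)))
        constructor
        · rintro (hall | ⟨j, hj, hs, hpre⟩)
          · refine Or.inr ⟨by simpa using hall 0 (by omega), Or.inl fun i hi => ?_⟩
            have := hall (i + 1) (by omega)
            rwa [show k + (i + 1) = k + 1 + i from by omega] at this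
          · cases j with
            | zero => exact Or.inl (by simpa using hs)
            | succ j =>
              refine Or.inr ⟨by simpa using hpre 0 (by omega), Or.inr ⟨j, by omega,
                by rw [show k + 1 + j = k + (j + 1) from by omega]; exact hs,
                fun i hi => ?_⟩⟩
              have := hpre (i + 1) (by omega)
              rwa [show k + (i + 1) = k + 1 + i from by omega] at this
        · rintro (hs | ⟨hφ0, hall | ⟨j, hj, hs, hpre⟩⟩)
          · exact Or.inr ⟨0, by omega, by simpa using hs, fun i hi => absurd hi (by omega)⟩
          · refine Or.inl fun i hi => ?_
            cases i with
            | zero => simpa using hφ0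
            | succ i =>
              have := hall i (by omega)
              rwa [show k + 1 + i = k + (i + 1) from by omega] at this
          · refine Or.inr ⟨j + 1, by omega,
              by rw [show k + (j + 1) = k + 1 + j from by omega]; exact hs,
              fun i hi => ?_⟩
            cases i with
            | zero => simpa using hφ0
            | succ i =>
              have := hpre i (by omega)
              rwa [show k + 1 + i = k + (i + 1) from by omega] at this
  | wuntil φ ψ ihφ ihψ =>
      intro k
      show ((∀ i, Sat w φ (k + i)) ∨ ∃ j, Sat w ψ (k + j) ∧ ∀ i < j, Sat w φ (k + i))
        ↔ Sat w (cdisj (expand ψ (w k)) (.conj (expand φ (w k)) (.wuntil φ ψ))) (k + 1)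
      rw [sat_cdisj]
      show _ ↔ Sat w (expand ψ (w k)) (k + 1) ∨
        (Sat w (expand φ (w k)) (k + 1) ∧ Sat w (.wuntil φ ψ) (k + 1))
      rw [← ihφ, ← ihψ]
      show _ ↔ Sat w ψ k ∨ (Sat w φ k ∧
        ((∀ i, Sat w φ (k + 1 + i)) ∨ ∃ j, Sat w ψ (k + 1 + j) ∧ ∀ i < j, Sat w φ (k + 1 + i)))
      constructor
      · rintro (hall | ⟨j, hs, hpre⟩)
        · refine Or.inr ⟨by simpa using hall 0, Or.inl fun i => ?_⟩
          have := hall (i + 1)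
          rwa [show k + (i + 1) = k + 1 + i from by omega] at this
        · cases j with
          | zero => exact Or.inl (by simpa using hs)
          | succ j =>
            refine Or.inr ⟨by simpa using hpre 0 (by omega), Or.inr ⟨j,
              by rw [show k + 1 + j = k + (j + 1) from by omega]; exact hs,
              fun i hi => ?_⟩⟩
            have := hpre (i + 1) (by omega)
            rwa [show k + (i + 1) = k + 1 + i from by omega] at this
      · rintro (hs | ⟨hφ0, hall | ⟨j, hs, hpre⟩⟩)
        · exact Or.inr ⟨0, by simpa using hs, fun i hi => absurd hi (by omega)⟩
        · refine Or.inl fun i => ?_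
          cases i with
          | zero => simpa using hφ0
          | succ i =>
            have := hall i
            rwa [show k + 1 + i = k + (i + 1) from by omega] at this
        · refine Or.inr ⟨j + 1,
            by rw [show k + (j + 1) = k + 1 + j from by omega]; exact hs,
            fun i hi => ?_⟩
          cases i with
          | zero => simpa using hφ0
          | succ i =>
            have := hpre i (by omega)
            rwa [show k + 1 + i = k + (i + 1) from by omega] at this

lemma sat_expandIter (σ : ℕ → Set AP) (φ : SLTL AP) :
    ∀ k, Sat σ φ 0 ↔ Sat σ (expandIter φ σ k) k := by
  intro k
  induction k with
  | zero => exact Iff.rfl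
  | succ k ih =>
    rw [ih, sat_expand σ (expandIter φ σ k) k]
    exact Iff.rfl

lemma expandIter_persist {φ : SLTL AP} {σ : ℕ → Set AP} {k j : ℕ} (hkj : k ≤ j)
    (h : expandIter φ σ k = .ff) : expandIter φ σ j = .ff := by
  induction j, hkj using Nat.le_induction with
  | base => exact h
  | succ j hj ih =>
    show expand (expandIter φ σ j) (σ j) = .ff
    rw [ih]
    rfl

lemma expandIter_shift (φ : SLTL AP) (σ : ℕ → Set AP) :
    ∀ k, expandIter φ σ (k + 1) = expandIter (expand φ (σ 0)) (fun i => σ (i + 1)) k := by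
  intro k
  induction k with
  | zero => rfl
  | succ k ih =>
    show expand (expandIter φ σ (k + 1)) (σ (k + 1)) = _
    rw [ih]
    rfl

lemma expandIter_cconj (a b : SLTL AP) (σ : ℕ → Set AP) :
    ∀ k, expandIter (cconj a b) σ k = cconj (expandIter a σ k) (expandIter b σ k) := by
  intro k
  induction k with
  | zero => rfl
  | succ k ih =>
    show expand (expandIter (cconj a b) σ k) (σ k) = _
    rw [ih, expand_cconj]
    rfl

lemma expandIter_cdisj (a b : SLTL AP) (σ : ℕ → Set AP) :
    ∀ k, expandIter (cdisj a b) σ k = cdisj (expandIter a σ k) (expandIter b σ k) := by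
  intro k
  induction k with
  | zero => rfl
  | succ k ih =>
    show expand (expandIter (cdisj a b) σ k) (σ k) = _
    rw [ih, expand_cdisj]
    rfl

lemma expandIter_conj (φ ψ : SLTL AP) (σ : ℕ → Set AP) (k : ℕ) :
    expandIter (.conj φ ψ) σ (k + 1) = cconj (expandIter φ σ (k + 1)) (expandIter ψ σ (k + 1)) := by
  rw [expandIter_shift, expandIter_shift φ, expandIter_shift ψ,
    show expand (.conj φ ψ) (σ 0) = cconj (expand φ (σ 0)) (expand ψ (σ 0)) from rfl,
    expandIter_cconj]

lemma expandIter_disj (φ ψ : SLTL AP) (σ : ℕ → Set AP) (k : ℕ) :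
    expandIter (.disj φ ψ) σ (k + 1) = cdisj (expandIter φ σ (k + 1)) (expandIter ψ σ (k + 1)) := by
  rw [expandIter_shift, expandIter_shift φ, expandIter_shift ψ,
    show expand (.disj φ ψ) (σ 0) = cdisj (expand φ (σ 0)) (expand ψ (σ 0)) from rfl,
    expandIter_cdisj]

lemma expandIter_next0 (φ : SLTL AP) (σ : ℕ → Set AP) (k : ℕ) :
    expandIter (.next 0 φ) σ (k + 1) = expandIter φ σ (k + 1) := by
  rw [expandIter_shift, expandIter_shift φ]
  rfl

lemma expandIter_next_succ (n : ℕ) (φ : SLTL AP) (σ : ℕ → Set AP) (k : ℕ) :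
    expandIter (.next (n + 1) φ) σ (k + 1) = expandIter (.next n φ) (fun i => σ (i + 1)) k := by
  rw [expandIter_shift]
  rfl

lemma expandIter_fleq0 (φ : SLTL AP) (σ : ℕ → Set AP) (k : ℕ) :
    expandIter (.fleq 0 φ) σ (k + 1) = expandIter φ σ (k + 1) := by
  rw [expandIter_shift, expandIter_shift φ]
  rfl

lemma expandIter_fleq_succ (n : ℕ) (φ : SLTL AP) (σ : ℕ → Set AP) (k : ℕ) :
    expandIter (.fleq (n + 1) φ) σ (k + 1) =
      cdisj (expandIter φ σ (k + 1)) (expandIter (.fleq n φ) (fun i => σ (i + 1)) k) := by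
  rw [expandIter_shift, expandIter_shift φ,
    show expand (.fleq (n + 1) φ) (σ 0) = cdisj (expand φ (σ 0)) (.fleq n φ) from rfl,
    expandIter_cdisj]

lemma expandIter_wleq0 (φ ψ : SLTL AP) (σ : ℕ → Set AP) (k : ℕ) :
    expandIter (.wleq 0 φ ψ) σ (k + 1) =
      cdisj (expandIter ψ σ (k + 1)) (expandIter φ σ (k + 1)) := by
  rw [expandIter_shift, expandIter_shift φ, expandIter_shift ψ,
    show expand (.wleq 0 φ ψ) (σ 0) = cdisj (expand ψ (σ 0)) (expand φ (σ 0)) from rfl,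
    expandIter_cdisj]

lemma expandIter_wleq_succ (n : ℕ) (φ ψ : SLTL AP) (σ : ℕ → Set AP) (k : ℕ) :
    expandIter (.wleq (n + 1) φ ψ) σ (k + 2) =
      cdisj (expandIter ψ σ (k + 2))
        (cconj (expandIter φ σ (k + 2)) (expandIter (.wleq n φ ψ) (fun i => σ (i + 1)) (k + 1))) := by
  rw [show k + 2 = (k + 1) + 1 from rfl, expandIter_shift,
    show expand (.wleq (n + 1) φ ψ) (σ 0)
      = cdisj (expand ψ (σ 0)) (.conj (expand φ (σ 0)) (.wleq n φ ψ)) from rfl,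
    expandIter_cdisj, expandIter_conj, ← expandIter_shift, ← expandIter_shift φ]

lemma expandIter_wuntil_succ (φ ψ : SLTL AP) (σ : ℕ → Set AP) (k : ℕ) :
    expandIter (.wuntil φ ψ) σ (k + 2) =
      cdisj (expandIter ψ σ (k + 2))
        (cconj (expandIter φ σ (k + 2)) (expandIter (.wuntil φ ψ) (fun i => σ (i + 1)) (k + 1))) := by
  rw [show k + 2 = (k + 1) + 1 from rfl, expandIter_shift,
    show expand (.wuntil φ ψ) (σ 0)
      = cdisj (expand ψ (σ 0)) (.conj (expand φ (σ 0)) (.wuntil φ ψ)) from rfl,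
    expandIter_cdisj, expandIter_conj, ← expandIter_shift, ← expandIter_shift φ]

open Classical in
lemma unsat_bot : ∀ (φ : SLTL AP) (σ : ℕ → Set AP), ¬ Sat σ φ 0 →
    ∃ k, expandIter φ σ k = .ff := by
  intro φ
  induction φ with
  | tt => intro σ h; exact absurd trivial h
  | ff => intro σ _; exact ⟨0, rfl⟩
  | atom a =>
    intro σ h
    refine ⟨1, ?_⟩
    show expand (.atom a) (σ 0) = .ff
    show (if a ∈ σ 0 then (SLTL.tt : SLTL AP) else SLTL.ff) = SLTL.ff
    exact if_neg h
  | natom a =>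
    intro σ h
    refine ⟨1, ?_⟩
    show expand (.natom a) (σ 0) = .ff
    show (if a ∈ σ 0 then (SLTL.ff : SLTL AP) else SLTL.tt) = SLTL.ff
    exact if_pos (not_not.mp h)
  | conj φ ψ ihφ ihψ =>
    intro σ h
    rw [show Sat σ (.conj φ ψ) 0 = (Sat σ φ 0 ∧ Sat σ ψ 0) from rfl, not_and_or] at h
    rcases h with h | h
    · obtain ⟨k, hk⟩ := ihφ σ h
      refine ⟨k + 1, ?_⟩
      rw [expandIter_conj, expandIter_persist (Nat.le_succ k) hk, cconj_ff_left]
    · obtain ⟨k, hk⟩ := ihψ σ h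
      refine ⟨k + 1, ?_⟩
      rw [expandIter_conj, expandIter_persist (Nat.le_succ k) hk, cconj_ff_right]
  | disj φ ψ ihφ ihψ =>
    intro σ h
    rw [show Sat σ (.disj φ ψ) 0 = (Sat σ φ 0 ∨ Sat σ ψ 0) from rfl, not_or] at h
    obtain ⟨k1, hk1⟩ := ihφ σ h.1
    obtain ⟨k2, hk2⟩ := ihψ σ h.2
    refine ⟨max k1 k2 + 1, ?_⟩
    rw [expandIter_disj, expandIter_persist (show k1 ≤ max k1 k2 + 1 by omega) hk1,
      expandIter_persist (show k2 ≤ max k1 k2 + 1 by omega) hk2, cdisj_ff_left]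
  | next n φ ih =>
    induction n with
    | zero =>
      intro σ h
      have h0 : ¬ Sat σ φ 0 := fun hc => h hc
      obtain ⟨k, hk⟩ := ih σ h0
      exact ⟨k + 1, by rw [expandIter_next0]; exact expandIter_persist (Nat.le_succ k) hk⟩
    | succ n ihn =>
      intro σ h
      have h' : ¬ Sat (fun i => σ (i + 1)) (.next n φ) 0 := by
        intro hc
        apply h
        show Sat σ φ (0 + (n + 1))
        have := (sat_shift σ 1 φ (0 + n)).mp hc
        rwa [show 0 + n + 1 = 0 + (n + 1) from by omega] at this
      obtain ⟨k, hk⟩ := ihn (fun i => σ (i + 1)) h'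
      exact ⟨k + 1, by rw [expandIter_next_succ]; exact hk⟩
  | fleq n φ ih =>
    induction n with
    | zero =>
      intro σ h
      have h0 : ¬ Sat σ φ 0 := fun hc => h ⟨0, Nat.le_refl 0, hc⟩
      obtain ⟨k, hk⟩ := ih σ h0
      exact ⟨k + 1, by rw [expandIter_fleq0]; exact expandIter_persist (Nat.le_succ k) hk⟩
    | succ n ihn =>
      intro σ h
      have h0 : ¬ Sat σ φ 0 := fun hc => h ⟨0, by omega, hc⟩
      have h' : ¬ Sat (fun i => σ (i + 1)) (.fleq n φ) 0 := by
        intro hc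
        obtain ⟨i, hi, hs⟩ := hc
        apply h
        refine ⟨i + 1, by omega, ?_⟩
        have := (sat_shift σ 1 φ (0 + i)).mp hs
        rwa [show 0 + i + 1 = 0 + (i + 1) from by omega] at this
      obtain ⟨k1, hk1⟩ := ih σ h0
      obtain ⟨k2, hk2⟩ := ihn (fun i => σ (i + 1)) h'
      refine ⟨max k1 k2 + 1, ?_⟩
      rw [expandIter_fleq_succ, expandIter_persist (show k1 ≤ max k1 k2 + 1 by omega) hk1,
        expandIter_persist (show k2 ≤ max k1 k2 by omega) hk2, cdisj_ff_left]
  | wleq n φ ψ ihφ ihψ =>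
    induction n with
    | zero =>
      intro σ h
      have h0φ : ¬ Sat σ φ 0 := fun hc => h (Or.inl fun i hi => by
        obtain rfl : i = 0 := Nat.le_zero.mp hi
        exact hc)
      have h0ψ : ¬ Sat σ ψ 0 := fun hc =>
        h (Or.inr ⟨0, Nat.le_refl 0, hc, fun i hi => absurd hi (Nat.not_lt_zero i)⟩)
      obtain ⟨k1, hk1⟩ := ihφ σ h0φ
      obtain ⟨k2, hk2⟩ := ihψ σ h0ψ
      refine ⟨max k1 k2 + 1, ?_⟩
      rw [expandIter_wleq0, expandIter_persist (show k2 ≤ max k1 k2 + 1 by omega) hk2,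
        expandIter_persist (show k1 ≤ max k1 k2 + 1 by omega) hk1, cdisj_ff_left]
    | succ n ihn =>
      intro σ h
      have h0ψ : ¬ Sat σ ψ 0 := fun hc =>
        h (Or.inr ⟨0, by omega, hc, fun i hi => absurd hi (Nat.not_lt_zero i)⟩)
      obtain ⟨k2, hk2⟩ := ihψ σ h0ψ
      by_cases hφ0 : Sat σ φ 0
      · have h' : ¬ Sat (fun i => σ (i + 1)) (.wleq n φ ψ) 0 := by
          intro hc
          apply h
          rcases hc with hall | ⟨j, hj, hs, hpre⟩
          · refine Or.inl fun i hi => ?_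
            cases i with
            | zero => exact hφ0
            | succ i =>
              have := (sat_shift σ 1 φ (0 + i)).mp (hall i (by omega))
              rwa [show 0 + i + 1 = 0 + (i + 1) from by omega] at this
          · refine Or.inr ⟨j + 1, by omega, ?_, ?_⟩
            · have := (sat_shift σ 1 ψ (0 + j)).mp hs
              rwa [show 0 + j + 1 = 0 + (j + 1) from by omega] at this
            · intro i hi
              cases i with
              | zero => exact hφ0
              | succ i =>
                have := (sat_shift σ 1 φ (0 + i)).mp (hpre i (by omega))
                rwa [show 0 + i + 1 = 0 + (i + 1) from by omega] at this
        obtain ⟨k3, hk3⟩ := ihn (fun i => σ (i + 1)) h'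
        refine ⟨max k2 k3 + 2, ?_⟩
        rw [expandIter_wleq_succ, expandIter_persist (show k2 ≤ max k2 k3 + 2 by omega) hk2,
          expandIter_persist (show k3 ≤ max k2 k3 + 1 by omega) hk3, cconj_ff_right,
          cdisj_ff_left]
      · obtain ⟨k1, hk1⟩ := ihφ σ hφ0
        refine ⟨max k1 k2 + 2, ?_⟩
        rw [expandIter_wleq_succ, expandIter_persist (show k2 ≤ max k1 k2 + 2 by omega) hk2,
          expandIter_persist (show k1 ≤ max k1 k2 + 2 by omega) hk1, cconj_ff_left,
          cdisj_ff_left]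
  | wuntil φ ψ ihφ ihψ =>
    have key : ∀ i0 (σ : ℕ → Set AP), ¬ Sat σ φ i0 → ¬ Sat σ (.wuntil φ ψ) 0 →
        ∃ k, expandIter (.wuntil φ ψ) σ k = .ff := by
      intro i0
      induction i0 using Nat.strong_induction_on with
      | _ i0 IH =>
        intro σ hbad h
        have h0ψ : ¬ Sat σ ψ 0 := fun hc =>
          h (Or.inr ⟨0, hc, fun i hi => absurd hi (Nat.not_lt_zero i)⟩)
        obtain ⟨k2, hk2⟩ := ihψ σ h0ψ
        by_cases hφ0 : Sat σ φ 0
        · cases i0 with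
          | zero => exact absurd hφ0 hbad
          | succ i =>
            have hbad' : ¬ Sat (fun i' => σ (i' + 1)) φ i := fun hc =>
              hbad ((sat_shift σ 1 φ i).mp hc)
            have h' : ¬ Sat (fun i' => σ (i' + 1)) (.wuntil φ ψ) 0 := by
              intro hc
              apply h
              rcases hc with hall | ⟨j, hs, hpre⟩
              · refine Or.inl fun i' => ?_
                cases i' with
                | zero => exact hφ0
                | succ i' =>
                  have := (sat_shift σ 1 φ (0 + i')).mp (hall i')
                  rwa [show 0 + i' + 1 = 0 + (i' + 1) from by omega] at this
              · refine Or.inr ⟨j + 1, ?_, ?_⟩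
                · have := (sat_shift σ 1 ψ (0 + j)).mp hs
                  rwa [show 0 + j + 1 = 0 + (j + 1) from by omega] at this
                · intro i' hi'
                  cases i' with
                  | zero => exact hφ0
                  | succ i' =>
                    have := (sat_shift σ 1 φ (0 + i')).mp (hpre i' (by omega))
                    rwa [show 0 + i' + 1 = 0 + (i' + 1) from by omega] at this
            obtain ⟨k3, hk3⟩ := IH i (Nat.lt_succ_self i) (fun i' => σ (i' + 1)) hbad' h'
            refine ⟨max k2 k3 + 2, ?_⟩
            rw [expandIter_wuntil_succ, expandIter_persist (show k2 ≤ max k2 k3 + 2 by omega) hk2,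
              expandIter_persist (show k3 ≤ max k2 k3 + 1 by omega) hk3, cconj_ff_right,
              cdisj_ff_left]
        · obtain ⟨k1, hk1⟩ := ihφ σ hφ0
          refine ⟨max k1 k2 + 2, ?_⟩
          rw [expandIter_wuntil_succ, expandIter_persist (show k2 ≤ max k1 k2 + 2 by omega) hk2,
            expandIter_persist (show k1 ≤ max k1 k2 + 2 by omega) hk1, cconj_ff_left,
            cdisj_ff_left]
    intro σ h
    have hex : ∃ i0, ¬ Sat σ φ (0 + i0) := by
      by_contra hc
      push_neg at hc
      exact h (Or.inl hc)
    obtain ⟨i0, hi0⟩ := hex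
    exact key i0 σ (by rwa [Nat.zero_add] at hi0) h
end SLTL

/-- A word fails a `SafeLTL_B` formula at position `t` iff some finite expansion of the
formula along the suffix `τ[t]` collapses to `⊥`; in particular (the case `t = 0`),
`τ ∉ L(φ)` iff some expansion of `φ` along `τ` equals `⊥`. -/
theorem sltl_unsat_iff_expand_bot {AP : Type} [Fintype AP] (φ : SLTL AP) (τ : ℕ → Set AP) :
    (∀ t : ℕ, ¬ SLTL.Sat τ φ t ↔ ∃ k : ℕ, SLTL.expandIter φ (fun i => τ (i + t)) k = SLTL.ff) ∧
    (τ ∉ SLTL.lang φ ↔ ∃ k : ℕ, SLTL.expandIter φ τ k = SLTL.ff) := by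
  constructor
  · intro t
    constructor
    · intro h
      apply SLTL.unsat_bot φ (fun i => τ (i + t))
      intro hc
      apply h
      have := (SLTL.sat_shift τ t φ 0).mp hc
      rwa [Nat.zero_add] at this
    · rintro ⟨k, hk⟩ hs
      have hs0 : SLTL.Sat (fun i => τ (i + t)) φ 0 := by
        rw [SLTL.sat_shift τ t φ 0, Nat.zero_add]
        exact hs
      have := (SLTL.sat_expandIter _ φ k).mp hs0
      rw [hk] at this
      exact this
  · constructor
    · exact fun h => SLTL.unsat_bot φ τ h
    · rintro ⟨k, hk⟩ hs
      have := (SLTL.sat_expandIter τ φ k).mp hs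
      rw [hk] at this
      exact this
end

section
/- For every SafeLTL_B formula φ, every m ⊆ AP, and every infinite word w ∈ (2^AP)^ω with w₀ = m: w ⊨₀ φ if and only if w[1] ⊨₀ expand(φ, m), where w[1] is the suffix of w starting at position 1. -/
section Aux
open SLTL

theorem sat_cfold {AP : Type} (w : ℕ → Set AP) (φ : SLTL AP) (k : ℕ) :
    SLTL.Sat w (SLTL.cfold φ) k ↔ SLTL.Sat w φ k := by
  cases φ with
  | conj a b => cases a <;> cases b <;> simp [SLTL.cfold, SLTL.Sat]
  | disj a b => cases a <;> cases b <;> simp [SLTL.cfold, SLTL.Sat]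
  | tt => rfl
  | ff => rfl
  | atom a => rfl
  | natom a => rfl
  | next n a => rfl
  | fleq n a => rfl
  | wleq n a b => rfl
  | wuntil a b => rfl

theorem sat_shift {AP : Type} (w : ℕ → Set AP) (φ : SLTL AP) :
    ∀ k, SLTL.Sat (fun i => w (i + 1)) φ k ↔ SLTL.Sat w φ (k + 1) := by
  induction φ with
  | tt => intro k; rfl
  | ff => intro k; rfl
  | atom a => intro k; rfl
  | natom a => intro k; rfl
  | conj φ ψ ih1 ih2 => intro k; simp [SLTL.Sat, ih1, ih2]
  | disj φ ψ ih1 ih2 => intro k; simp [SLTL.Sat, ih1, ih2]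
  | next n φ ih =>
      intro k; simp only [SLTL.Sat, ih]
      rw [Nat.add_right_comm]
  | fleq n φ ih =>
      intro k
      simp only [SLTL.Sat, ih]
      constructor
      · rintro ⟨i, hi, h⟩; exact ⟨i, hi, by rwa [Nat.add_right_comm]⟩
      · rintro ⟨i, hi, h⟩; exact ⟨i, hi, by rwa [Nat.add_right_comm]⟩
  | wleq n φ ψ ih1 ih2 =>
      intro k
      simp only [SLTL.Sat, ih1, ih2]
      constructor
      · rintro (h | ⟨j, hj, hq, hp⟩)
        · exact Or.inl fun i hi => by rw [Nat.add_right_comm]; exact h i hi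
        · exact Or.inr ⟨j, hj, by rwa [Nat.add_right_comm],
            fun i hi => by rw [Nat.add_right_comm]; exact hp i hi⟩
      · rintro (h | ⟨j, hj, hq, hp⟩)
        · exact Or.inl fun i hi => by rw [Nat.add_right_comm]; exact h i hi
        · exact Or.inr ⟨j, hj, by rwa [Nat.add_right_comm] at hq,
            fun i hi => by rw [Nat.add_right_comm]; exact hp i hi⟩
  | wuntil φ ψ ih1 ih2 =>
      intro k
      simp only [SLTL.Sat, ih1, ih2]
      constructor
      · rintro (h | ⟨j, hq, hp⟩)
        · exact Or.inl fun i => by rw [Nat.add_right_comm]; exact h i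
        · exact Or.inr ⟨j, by rwa [Nat.add_right_comm],
            fun i hi => by rw [Nat.add_right_comm]; exact hp i hi⟩
      · rintro (h | ⟨j, hq, hp⟩)
        · exact Or.inl fun i => by rw [Nat.add_right_comm]; exact h i
        · exact Or.inr ⟨j, by rwa [Nat.add_right_comm] at hq,
            fun i hi => by rw [Nat.add_right_comm]; exact hp i hi⟩

theorem sat_expand_aux {AP : Type} (w : ℕ → Set AP) :
    ∀ φ : SLTL AP, SLTL.Sat w φ 0 ↔ SLTL.Sat w (SLTL.expand φ (w 0)) 1 := by
  intro φ
  induction φ with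
  | tt => simp [SLTL.expand, SLTL.Sat]
  | ff => simp [SLTL.expand, SLTL.Sat]
  | atom a =>
      simp only [SLTL.expand]
      split <;> rename_i h <;> simp [SLTL.Sat, h]
  | natom a =>
      simp only [SLTL.expand]
      split <;> rename_i h <;> simp [SLTL.Sat, h]
  | conj φ ψ ih1 ih2 => simp [SLTL.expand, sat_cfold, SLTL.Sat, ih1, ih2]
  | disj φ ψ ih1 ih2 => simp [SLTL.expand, sat_cfold, SLTL.Sat, ih1, ih2]
  | next n φ ih =>
      cases n with
      | zero => simpa [SLTL.expand, SLTL.Sat] using ih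
      | succ n => simp [SLTL.expand, SLTL.Sat, Nat.add_comm]
  | fleq n φ ih =>
      cases n with
      | zero => simpa [SLTL.expand, SLTL.Sat] using ih
      | succ n =>
          simp only [SLTL.expand, sat_cfold, SLTL.Sat, ← ih]
          constructor
          · rintro ⟨i, hi, h⟩
            rcases i with _ | i
            · exact Or.inl h
            · exact Or.inr ⟨i, by omega, by simpa [Nat.add_comm] using h⟩
          · rintro (h | ⟨i, hi, h⟩)
            · exact ⟨0, by omega, h⟩
            · exact ⟨i + 1, by omega, by simpa [Nat.add_comm] using h⟩
  | wleq n φ ψ ih1 ih2 =>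
      cases n with
      | zero =>
          simp only [SLTL.expand, sat_cfold, SLTL.Sat, ← ih1, ← ih2]
          constructor
          · rintro (h | ⟨j, hj, hq, hp⟩)
            · exact Or.inr (by simpa using h 0 (by omega))
            · interval_cases j
              exact Or.inl (by simpa using hq)
          · rintro (h | h)
            · exact Or.inr ⟨0, by omega, by simpa using h, by omega⟩
            · refine Or.inl fun i hi => ?_
              interval_cases i
              simpa using h
      | succ n =>
          simp only [SLTL.expand, sat_cfold, SLTL.Sat, ← ih1, ← ih2]
          constructor
          · rintro (h | ⟨j, hj, hq, hp⟩)
            · refine Or.inr ⟨by simpa using h 0 (by omega), Or.inl fun i hi => ?_⟩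
              simpa [Nat.add_comm] using h (i + 1) (by omega)
            · rcases j with _ | j
              · exact Or.inl (by simpa using hq)
              · refine Or.inr ⟨by simpa using hp 0 (by omega),
                  Or.inr ⟨j, by omega, by simpa [Nat.add_comm] using hq,
                    fun i hi => by simpa [Nat.add_comm] using hp (i + 1) (by omega)⟩⟩
          · rintro (h | ⟨h0, h | ⟨j, hj, hq, hp⟩⟩)
            · exact Or.inr ⟨0, by omega, by simpa using h, by omega⟩
            · refine Or.inl fun i hi => ?_
              rcases i with _ | i
              · simpa using h0
              · simpa [Nat.add_comm] using h i (by omega)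
            · refine Or.inr ⟨j + 1, by omega, by simpa [Nat.add_comm] using hq,
                fun i hi => ?_⟩
              rcases i with _ | i
              · simpa using h0
              · simpa [Nat.add_comm] using hp i (by omega)
  | wuntil φ ψ ih1 ih2 =>
      simp only [SLTL.expand, sat_cfold, SLTL.Sat, ← ih1, ← ih2]
      constructor
      · rintro (h | ⟨j, hq, hp⟩)
        · refine Or.inr ⟨by simpa using h 0, Or.inl fun i => ?_⟩
          simpa [Nat.add_comm] using h (i + 1)
        · rcases j with _ | j
          · exact Or.inl (by simpa using hq)
          · refine Or.inr ⟨by simpa using hp 0 (by omega),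
              Or.inr ⟨j, by simpa [Nat.add_comm] using hq,
                fun i hi => by simpa [Nat.add_comm] using hp (i + 1) (by omega)⟩⟩
      · rintro (h | ⟨h0, h | ⟨j, hq, hp⟩⟩)
        · exact Or.inr ⟨0, by simpa using h, by omega⟩
        · refine Or.inl fun i => ?_
          rcases i with _ | i
          · simpa using h0
          · simpa [Nat.add_comm] using h i
        · refine Or.inr ⟨j + 1, by simpa [Nat.add_comm] using hq, fun i hi => ?_⟩
          rcases i with _ | i
          · simpa using h0
          · simpa [Nat.add_comm] using hp i (by omega)

end Aux

/-- Correctness of one-step expansion: for a word `w` whose first letter is `m`,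
`w ⊨₀ φ` iff the suffix `w[1]` satisfies `expand(φ, m)` at position `0`. -/
theorem sltl_sat_iff_expand {AP : Type} [Fintype AP] (φ : SLTL AP) (m : Set AP)
    (w : ℕ → Set AP) (h0 : w 0 = m) :
    SLTL.Sat w φ 0 ↔ SLTL.Sat (fun i => w (i + 1)) (SLTL.expand φ m) 0 := by
  subst h0
  rw [sat_shift]
  exact sat_expand_aux w φ
end
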